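/- arXiv:1012.0774 — 2 statements merged into one kernel-verified Lean document; each statement's English description precedes it below -/
import Mathlib

section
/- Let p = 1 in the framework (R, S convex, Lipschitz, even, nonnegative, positively 1-homogeneous, S(f) = 0 iff f = 0). Let f ∈ ℝ^n, f ≠ 0, set λ = F(f) = R(f)/S(f), and let s ∈ ∂S(f). If u ∈ ℝ^n satisfies R(u) − λ⟨u, s⟩ < 0, then u ≠ 0 and F(u) < F(f). -/
open Finset

/-- Euclidean inner product on `Fin n → ℝ`. -/
def ip {n : ℕ} (x y : Fin n → ℝ) : ℝ := ∑ i, x i * y i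

/-- Subdifferential of a convex function `R : ℝ^n → ℝ` at `x`. -/
def subdiff {n : ℕ} (R : (Fin n → ℝ) → ℝ) (x : Fin n → ℝ) : Set (Fin n → ℝ) :=
  {r | ∀ y, R x + ip r (y - x) ≤ R y}

/-- `G` is positively `p`-homogeneous: `G (γ • x) = γ^p * G x` for all `γ ≥ 0`. -/
def PosHomog {n : ℕ} (p : ℝ) (G : (Fin n → ℝ) → ℝ) : Prop :=
  ∀ γ : ℝ, 0 ≤ γ → ∀ x, G (γ • x) = γ ^ p * G x

/-!
For a positively 1-homogeneous `S`, testing the subgradient inequality at `2 • f` gives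
`⟨s, f⟩ ≤ S f`, so the affine minorant `S f + ⟨s, · - f⟩` of `S` is dominated by the linear
form `⟨s, ·⟩`, i.e. `⟨s, y⟩ ≤ S y` for every `y`. Hence `R u < λ ⟨u, s⟩ ≤ λ S u`; since
`R u ≥ 0` this forces `u ≠ 0`, so `S u > 0` and dividing gives `R u / S u < λ`.
-/

theorem ip_comm {n : ℕ} (x y : Fin n → ℝ) : ip x y = ip y x :=
  dotProduct_comm x y

theorem ip_sub {n : ℕ} (x y z : Fin n → ℝ) : ip x (y - z) = ip x y - ip x z :=
  dotProduct_sub x y z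

theorem ip_zero_left {n : ℕ} (y : Fin n → ℝ) : ip 0 y = 0 :=
  zero_dotProduct y

theorem PosHomog.map_two_smul {n : ℕ} {S : (Fin n → ℝ) → ℝ} (hS : PosHomog 1 S)
    (x : Fin n → ℝ) : S ((2 : ℝ) • x) = 2 * S x := by
  simpa only [Real.rpow_one] using hS 2 zero_le_two x

theorem ip_le_of_mem_subdiff {n : ℕ} {S : (Fin n → ℝ) → ℝ} (hS : PosHomog 1 S)
    {f s : Fin n → ℝ} (hs : s ∈ subdiff S f) (y : Fin n → ℝ) : ip s y ≤ S y := by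
  have at_two_f := hs ((2 : ℝ) • f)
  rw [hS.map_two_smul, two_smul, add_sub_cancel_right] at at_two_f
  have at_y := hs y
  rw [ip_sub] at at_y
  linarith

theorem descent_p_one_general {n : ℕ} (R S : (Fin n → ℝ) → ℝ)
    (hRnonneg : ∀ x, 0 ≤ R x) (hSnonneg : ∀ x, 0 ≤ S x)
    (hShom : PosHomog 1 S)
    (hS0 : ∀ g : Fin n → ℝ, S g = 0 ↔ g = 0)
    (f : Fin n → ℝ) (lam : ℝ) (hlam : lam = R f / S f)
    (s : Fin n → ℝ) (hs : s ∈ subdiff S f)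
    (u : Fin n → ℝ) (hu : R u - lam * ip u s < 0) :
    u ≠ 0 ∧ R u / S u < R f / S f := by
  have hu0 : u ≠ 0 := by
    rintro rfl
    rw [ip_zero_left, mul_zero, sub_zero] at hu
    exact (hRnonneg 0).not_gt hu
  have hSu : 0 < S u := (hSnonneg u).lt_of_ne fun h => hu0 ((hS0 u).1 h.symm)
  have hlam0 : 0 ≤ lam := hlam ▸ div_nonneg (hRnonneg f) (hSnonneg f)
  have hRu : R u < lam * S u :=
    calc R u < lam * ip u s := by linarith
      _ ≤ lam * S u :=
        mul_le_mul_of_nonneg_left (ip_comm u s ▸ ip_le_of_mem_subdiff hShom hs u) hlam0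
  refine ⟨hu0, ?_⟩
  rwa [← hlam, div_lt_iff₀ hSu]

/-- Descent property for the inner problem of the IPM with `p = 1`: if
`R(u) − λ ⟨u, s⟩ < 0` where `λ = R(f)/S(f)` and `s ∈ ∂S(f)`, then `u ≠ 0` and
`F(u) < F(f)`, i.e. `R(u)/S(u) < R(f)/S(f)`. -/
theorem descent_p_one {n : ℕ} (R S : (Fin n → ℝ) → ℝ)
    (hRconv : ConvexOn ℝ Set.univ R) (hSconv : ConvexOn ℝ Set.univ S)
    (hRlip : ∃ K : NNReal, LipschitzWith K R) (hSlip : ∃ K : NNReal, LipschitzWith K S)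
    (hReven : ∀ x, R (-x) = R x) (hSeven : ∀ x, S (-x) = S x)
    (hRnonneg : ∀ x, 0 ≤ R x) (hSnonneg : ∀ x, 0 ≤ S x)
    (hRhom : PosHomog 1 R) (hShom : PosHomog 1 S)
    (hS0 : ∀ g : Fin n → ℝ, S g = 0 ↔ g = 0)
    (f : Fin n → ℝ) (hf : f ≠ 0) (lam : ℝ) (hlam : lam = R f / S f)
    (s : Fin n → ℝ) (hs : s ∈ subdiff S f)
    (u : Fin n → ℝ) (hu : R u - lam * ip u s < 0) :
    u ≠ 0 ∧ R u / S u < R f / S f :=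
  descent_p_one_general R S hRnonneg hSnonneg hShom hS0 f lam hlam s hs u hu
end

section
/- Let f ∈ ℝ^n, f ≠ 0, and suppose 0 is a median of f, i.e. 0 minimizes c ↦ Σ_{i=1}^n |f_i − c|. Then F₁(f) ≥ min over all t ∈ ℝ for which the threshold set C_t = {i : f_i > t} is nonempty and proper of RCC(C_t, C̄_t). -/
open Finset

/-- Total variation `TV(f) = ½ Σ_{i,j} w_ij |f_i − f_j|`. -/
noncomputable def TV {n : ℕ} (W : Fin n → Fin n → ℝ) (f : Fin n → ℝ) : ℝ :=
  (1 / 2) * ∑ i, ∑ j, W i j * |f i - f j|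

/-- `F₁(f) = TV(f) / ‖f‖₁`. -/
noncomputable def F1 {n : ℕ} (W : Fin n → Fin n → ℝ) (f : Fin n → ℝ) : ℝ :=
  TV W f / ∑ i, |f i|

/-- Ratio Cheeger cut of the partition `(C, Cᶜ)`. -/
noncomputable def RCC {n : ℕ} (W : Fin n → Fin n → ℝ) (C : Finset (Fin n)) : ℝ :=
  (∑ i ∈ C, ∑ j ∈ Cᶜ, W i j) / min (C.card : ℝ) (Cᶜ.card : ℝ)

/-!
Both terms of `F₁(f)` are integrals over thresholds `t`, with `C_t = {i | t < f i}`: by the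
coarea formula `TV(f) = ∫ cut(C_t) dt` (this uses the symmetry of `W`), and by the layer-cake
formula `‖f‖₁ = ∫ G(t) dt`, where `G(t) = |C_t|` for `t ≥ 0` and `G(t) = |C̄_t|` for `t < 0`.
Because `0` is a median of `f`, `G(t) ≤ min(|C_t|, |C̄_t|)`. Hence if `λ` is the least ratio
Cheeger cut among the finitely many proper threshold sets, `λ G(t) ≤ cut(C_t)` for every `t`,
and integrating gives `λ ‖f‖₁ ≤ TV(f)`.
-/

open MeasureTheory

section Thresholds

variable {ι : Type*} [Fintype ι]

noncomputable def thresholdSet (f : ι → ℝ) (t : ℝ) : Finset ι :=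
  Finset.univ.filter (fun i => t < f i)

theorem mem_thresholdSet {f : ι → ℝ} {t : ℝ} {i : ι} : i ∈ thresholdSet f t ↔ t < f i := by
  simp [thresholdSet]

theorem mem_compl_thresholdSet [DecidableEq ι] {f : ι → ℝ} {t : ℝ} {i : ι} :
    i ∈ (thresholdSet f t)ᶜ ↔ f i ≤ t := by
  simp [thresholdSet]

variable [DecidableEq ι] {f : ι → ℝ} (hmed : ∀ c : ℝ, ∑ i, |f i| ≤ ∑ i, |f i - c|)
include hmed

-- Moving the centre from `0` to `c > 0` gains `c` at every point of `A` and loses at most `c`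
-- elsewhere.
theorem card_le_card_compl_of_median {A : Finset ι} {c : ℝ} (hc : 0 < c)
    (hA : ∀ i ∈ A, c ≤ f i) : #A ≤ #Aᶜ := by
  have hin : ∑ i ∈ A, |f i - c| = ∑ i ∈ A, |f i| - #A * c := by
    rw [← nsmul_eq_mul, ← sum_const, ← sum_sub_distrib]
    refine sum_congr rfl fun i hi => ?_
    have := hA i hi
    rw [abs_of_nonneg (by linarith), abs_of_pos (by linarith)]
  have hout : ∑ i ∈ Aᶜ, |f i - c| ≤ ∑ i ∈ Aᶜ, |f i| + #Aᶜ * c := by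
    rw [← nsmul_eq_mul, ← sum_const, ← sum_add_distrib]
    exact sum_le_sum fun i _ => (abs_sub _ _).trans_eq (by rw [abs_of_pos hc])
  have hcmp := hmed c
  rw [← sum_add_sum_compl A, ← sum_add_sum_compl A (fun i => |f i - c|)] at hcmp
  exact_mod_cast le_of_mul_le_mul_right (by linarith : (#A : ℝ) * c ≤ #Aᶜ * c) hc

theorem card_thresholdSet_le_card_compl {t : ℝ} (ht : 0 ≤ t) :
    #(thresholdSet f t) ≤ #(thresholdSet f t)ᶜ := by
  rcases (thresholdSet f t).eq_empty_or_nonempty with hempty | hne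
  · simp [hempty]
  obtain ⟨i₀, hi₀, hmin⟩ := exists_min_image _ f hne
  exact card_le_card_compl_of_median hmed (by linarith [mem_thresholdSet.1 hi₀]) hmin

theorem card_compl_thresholdSet_le_card {t : ℝ} (ht : t < 0) :
    #(thresholdSet f t)ᶜ ≤ #(thresholdSet f t) := by
  have hmed_neg : ∀ c : ℝ, ∑ i, |(-f) i| ≤ ∑ i, |(-f) i - c| := fun c =>
    calc ∑ i, |(-f) i| = ∑ i, |f i| := by simp
      _ ≤ ∑ i, |f i - -c| := hmed (-c)
      _ = ∑ i, |(-f) i - c| := sum_congr rfl fun i _ => by rw [Pi.neg_apply, ← abs_neg]; ring_nf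
  simpa using card_le_card_compl_of_median hmed_neg (A := (thresholdSet f t)ᶜ) (neg_pos.2 ht)
    fun i hi => neg_le_neg (mem_compl_thresholdSet.1 hi)

end Thresholds

theorem integral_indicator_Ico_one (a b : ℝ) :
    ∫ t, (Set.Ico a b).indicator (1 : ℝ → ℝ) t = max (b - a) 0 := by
  rw [integral_indicator_one measurableSet_Ico, Real.volume_real_Ico]

theorem integrable_indicator_Ico_one (a b : ℝ) :
    Integrable ((Set.Ico a b).indicator (1 : ℝ → ℝ)) :=
  (integrable_indicator_iff measurableSet_Ico).2 (integrableOn_const measure_Ico_lt_top.ne)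

section Layers

variable {ι : Type*} [Fintype ι] [DecidableEq ι]

noncomputable def absLayer (f : ι → ℝ) (t : ℝ) : ℝ :=
  if 0 ≤ t then #(thresholdSet f t) else #(thresholdSet f t)ᶜ

theorem absLayer_eq_sum_indicator (f : ι → ℝ) (t : ℝ) :
    absLayer f t = ∑ i, ((Set.Ico 0 (f i)).indicator 1 t + (Set.Ico (f i) 0).indicator 1 t) := by
  unfold absLayer thresholdSet
  rw [compl_filter]
  split_ifs with ht <;> rw [natCast_card_filter] <;> refine sum_congr rfl fun i _ => ?_
  · simp [Set.indicator_apply, ht, not_lt.2 ht]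
  · simp [Set.indicator_apply, not_le.1 ht, ht]

theorem integrable_absLayer (f : ι → ℝ) : Integrable (absLayer f) := by
  simp_rw [funext (absLayer_eq_sum_indicator f)]
  exact integrable_finsetSum _ fun i _ =>
    (integrable_indicator_Ico_one _ _).add (integrable_indicator_Ico_one _ _)

theorem integral_absLayer (f : ι → ℝ) : ∫ t, absLayer f t = ∑ i, |f i| := by
  simp_rw [absLayer_eq_sum_indicator]
  rw [integral_finsetSum (f := fun i t =>
      (Set.Ico 0 (f i)).indicator 1 t + (Set.Ico (f i) 0).indicator (1 : ℝ → ℝ) t) _ fun i _ =>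
    (integrable_indicator_Ico_one _ _).add (integrable_indicator_Ico_one _ _)]
  refine sum_congr rfl fun i _ => ?_
  rw [integral_add (integrable_indicator_Ico_one _ _) (integrable_indicator_Ico_one _ _),
    integral_indicator_Ico_one, integral_indicator_Ico_one, sub_zero, zero_sub,
    max_zero_add_max_neg_zero_eq_abs_self]

theorem absLayer_le_min_card {f : ι → ℝ} (hmed : ∀ c : ℝ, ∑ i, |f i| ≤ ∑ i, |f i - c|) (t : ℝ) :
    absLayer f t ≤ min (#(thresholdSet f t) : ℝ) #(thresholdSet f t)ᶜ := by
  unfold absLayer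
  split_ifs with ht
  · exact le_min le_rfl (by exact_mod_cast card_thresholdSet_le_card_compl hmed ht)
  · exact le_min (by exact_mod_cast card_compl_thresholdSet_le_card hmed (not_le.1 ht)) le_rfl

end Layers

theorem sum_abs_pos {ι : Type*} [Fintype ι] {f : ι → ℝ} (hf : f ≠ 0) : 0 < ∑ i, |f i| :=
  let ⟨i, hi⟩ := Function.ne_iff.1 hf
  sum_pos' (fun j _ => abs_nonneg (f j)) ⟨i, mem_univ i, abs_pos.2 hi⟩

theorem exists_thresholdSet_nonempty_ne_univ {ι : Type*} [Fintype ι] [DecidableEq ι]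
    {f : ι → ℝ} (hf : f ≠ 0) (hmed : ∀ c : ℝ, ∑ i, |f i| ≤ ∑ i, |f i - c|) :
    ∃ t, (thresholdSet f t).Nonempty ∧ thresholdSet f t ≠ univ := by
  by_contra! h
  have hzero : ∀ t, absLayer f t ≤ 0 := fun t => (absLayer_le_min_card hmed t).trans <| by
    rcases (thresholdSet f t).eq_empty_or_nonempty with hempty | hne
    · simp [hempty]
    · simp [h t hne]
  exact (integral_absLayer f ▸ integral_nonpos hzero).not_gt (sum_abs_pos hf)

section Cuts

variable {n : ℕ} (W : Fin n → Fin n → ℝ)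

noncomputable def cut (C : Finset (Fin n)) : ℝ := ∑ i ∈ C, ∑ j ∈ Cᶜ, W i j

theorem cut_thresholdSet_eq_sum_indicator (f : Fin n → ℝ) (t : ℝ) :
    cut W (thresholdSet f t) = ∑ i, ∑ j, W i j * (Set.Ico (f j) (f i)).indicator 1 t := by
  simp only [cut, sum_filter, thresholdSet, compl_filter, Set.indicator_apply, Set.mem_Ico,
    mul_ite, mul_zero]
  refine sum_congr rfl fun i _ => ?_
  split_ifs with hi
  · exact sum_congr rfl fun j _ => by simp [hi, not_lt]
  · simp [hi]

theorem integrable_cut_thresholdSet (f : Fin n → ℝ) :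
    Integrable fun t => cut W (thresholdSet f t) := by
  simp_rw [cut_thresholdSet_eq_sum_indicator]
  exact integrable_finsetSum _ fun i _ => integrable_finsetSum _ fun j _ =>
    (integrable_indicator_Ico_one _ _).const_mul _

theorem TV_eq_integral_cut (hsym : ∀ i j, W i j = W j i) (f : Fin n → ℝ) :
    TV W f = ∫ t, cut W (thresholdSet f t) := by
  have hpos : ∫ t, cut W (thresholdSet f t) = ∑ i, ∑ j, W i j * max (f i - f j) 0 := by
    simp_rw [cut_thresholdSet_eq_sum_indicator]
    rw [integral_finsetSum _ fun i _ => integrable_finsetSum _ fun j _ =>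
      (integrable_indicator_Ico_one _ _).const_mul _]
    refine sum_congr rfl fun i _ => ?_
    rw [integral_finsetSum _ fun j _ => (integrable_indicator_Ico_one _ _).const_mul _]
    simp_rw [integral_const_mul, integral_indicator_Ico_one]
  have hswap : ∑ i, ∑ j, W i j * max (f j - f i) 0 = ∑ i, ∑ j, W i j * max (f i - f j) 0 := by
    rw [sum_comm]
    simp_rw [hsym]
  have habs : ∑ i, ∑ j, W i j * |f i - f j| =
      ∑ i, ∑ j, W i j * max (f i - f j) 0 + ∑ i, ∑ j, W i j * max (f j - f i) 0 := by
    simp_rw [← sum_add_distrib, ← mul_add, ← max_zero_add_max_neg_zero_eq_abs_self, neg_sub]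
  rw [hpos, TV, habs, hswap]
  ring

theorem RCC_nonneg (hnonneg : ∀ i j, 0 ≤ W i j) (C : Finset (Fin n)) : 0 ≤ RCC W C :=
  div_nonneg (sum_nonneg fun i _ => sum_nonneg fun j _ => hnonneg i j)
    (le_min (by positivity) (by positivity))

theorem mul_min_card_le_cut {C : Finset (Fin n)} {lam : ℝ}
    (h : C.Nonempty → C ≠ univ → lam ≤ RCC W C) : lam * min (#C : ℝ) #Cᶜ ≤ cut W C := by
  rcases C.eq_empty_or_nonempty with rfl | hne
  · simp [cut]
  by_cases huniv : C = univ
  · subst huniv; simp [cut]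
  have hmin : 0 < min (#C : ℝ) #Cᶜ :=
    lt_min (by simpa using hne) (by simpa [nonempty_iff_ne_empty] using huniv)
  exact (le_div_iff₀ hmin).1 (h hne huniv)

theorem exists_thresholdSet_forall_RCC_le (f : Fin n → ℝ)
    (h : ∃ t, (thresholdSet f t).Nonempty ∧ thresholdSet f t ≠ univ) :
    ∃ t₀, ((thresholdSet f t₀).Nonempty ∧ thresholdSet f t₀ ≠ univ) ∧
      ∀ t, (thresholdSet f t).Nonempty → thresholdSet f t ≠ univ →
        RCC W (thresholdSet f t₀) ≤ RCC W (thresholdSet f t) := by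
  obtain ⟨_, ⟨⟨t₀, rfl⟩, hproper⟩, hmin⟩ := Set.exists_min_image
    (Set.range (thresholdSet f) ∩ {C | C.Nonempty ∧ C ≠ univ}) (RCC W) (Set.toFinite _)
    (by obtain ⟨t, ht⟩ := h; exact ⟨_, ⟨t, rfl⟩, ht⟩)
  exact ⟨t₀, hproper, fun t hne huniv => hmin _ ⟨⟨t, rfl⟩, hne, huniv⟩⟩

end Cuts

theorem thresholding_bound_general (n : ℕ)
    (W : Fin n → Fin n → ℝ)
    (hsym : ∀ i j, W i j = W j i) (hnonneg : ∀ i j, 0 ≤ W i j)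
    (f : Fin n → ℝ) (hf : f ≠ 0)
    (hmed : ∀ c : ℝ, ∑ i, |f i| ≤ ∑ i, |f i - c|) :
    ∃ t : ℝ, (Finset.univ.filter (fun i => t < f i)).Nonempty ∧
      Finset.univ.filter (fun i => t < f i) ≠ Finset.univ ∧
      RCC W (Finset.univ.filter (fun i => t < f i)) ≤ F1 W f := by
  obtain ⟨t₀, ⟨hne, hproper⟩, hmin⟩ :=
    exists_thresholdSet_forall_RCC_le W f (exists_thresholdSet_nonempty_ne_univ hf hmed)
  refine ⟨t₀, hne, hproper, ?_⟩
  set lam := RCC W (thresholdSet f t₀)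
  rw [F1, le_div_iff₀ (sum_abs_pos hf), ← integral_absLayer, ← integral_const_mul,
    TV_eq_integral_cut W hsym]
  refine integral_mono ((integrable_absLayer f).const_mul lam) (integrable_cut_thresholdSet W f)
    fun t => ?_
  calc lam * absLayer f t
      ≤ lam * min (#(thresholdSet f t) : ℝ) #(thresholdSet f t)ᶜ :=
        mul_le_mul_of_nonneg_left (absLayer_le_min_card hmed t) (RCC_nonneg W hnonneg _)
    _ ≤ cut W (thresholdSet f t) := mul_min_card_le_cut W (hmin t)

/-- Optimal thresholding: if `f ≠ 0` has median `0`, then `F₁(f)` is at least the best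
ratio Cheeger cut obtained by thresholding `f`, i.e. there is a threshold `t` whose
(nonempty, proper) level set `C_t = {i : f_i > t}` satisfies `RCC(C_t, C̄_t) ≤ F₁(f)`. -/
theorem thresholding_bound (n : ℕ) (hn : 2 ≤ n)
    (W : Fin n → Fin n → ℝ)
    (hsym : ∀ i j, W i j = W j i) (hnonneg : ∀ i j, 0 ≤ W i j)
    (f : Fin n → ℝ) (hf : f ≠ 0)
    (hmed : ∀ c : ℝ, ∑ i, |f i| ≤ ∑ i, |f i - c|) :
    ∃ t : ℝ, (Finset.univ.filter (fun i => t < f i)).Nonempty ∧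
      Finset.univ.filter (fun i => t < f i) ≠ Finset.univ ∧
      RCC W (Finset.univ.filter (fun i => t < f i)) ≤ F1 W f :=
  thresholding_bound_general n W hsym hnonneg f hf hmed
end
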